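/- arXiv:2112.01322 — 7 statements merged into one kernel-verified Lean document; each statement's English description precedes it below -/
import Mathlib

section
/- For α ∈ (0,1], ω ∈ ℝ, and s > 0, the conformable Laplace transform of f(t) = sin(ω t^α/α) is ω/(ω² + s²), and of g(t) = cos(ω t^α/α) is s/(ω² + s²). -/
/-!
The substitution `u = t ^ α / α`, for which `du = t ^ (α - 1) dt`, turns the conformable Laplace
transform of `f (t ^ α / α)` into the classical Laplace transform of `f`. The classical transforms
of `cos (ω u)` and `sin (ω u)` are the real and imaginary parts of
`∫₀^∞ e^{(-s + iω) u} du = 1 / (s - iω) = (s + iω) / (ω² + s²)`.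
-/

open MeasureTheory Set Real

theorem integral_comp_rpow_div_Ioi {E : Type*} [NormedAddCommGroup E] [NormedSpace ℝ E]
    (g : ℝ → E) {α : ℝ} (hα : 0 < α) :
    ∫ t in Ioi 0, t ^ (α - 1) • g (t ^ α / α) = ∫ u in Ioi 0, g u := by
  have h := integral_comp_rpow_Ioi_of_pos (g := fun y => g (α⁻¹ * y)) hα
  rw [integral_comp_mul_left_Ioi g 0 (inv_pos.mpr hα), mul_zero, inv_inv] at h
  simp only [mul_smul, integral_smul] at h
  simpa only [div_eq_inv_mul] using smul_right_injective E hα.ne' h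

theorem integral_cexp_neg_mul_add_mul_I_Ioi {s : ℝ} (hs : 0 < s) (ω : ℝ) :
    ∫ u in Ioi (0 : ℝ), Complex.exp ((-s + ω * Complex.I) * u) =
      (s + ω * Complex.I) / ((ω ^ 2 + s ^ 2 : ℝ) : ℂ) := by
  have hre : (-s + ω * Complex.I).re < 0 := by simpa using hs
  have hne : -s + ω * Complex.I ≠ 0 := fun h => by simp [h] at hre
  have hne' : ((ω ^ 2 + s ^ 2 : ℝ) : ℂ) ≠ 0 := by exact_mod_cast (by positivity : ω ^ 2 + s ^ 2 ≠ 0)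
  rw [integral_exp_mul_complex_Ioi hre, Complex.ofReal_zero, mul_zero, Complex.exp_zero,
    div_eq_div_iff hne hne']
  push_cast
  linear_combination (-(ω : ℂ) ^ 2) * Complex.I_sq

theorem integral_exp_neg_mul_mul_cos_Ioi {s : ℝ} (hs : 0 < s) (ω : ℝ) :
    ∫ u in Ioi (0 : ℝ), exp (-s * u) * cos (ω * u) = s / (ω ^ 2 + s ^ 2) := by
  have h := integral_re (integrableOn_exp_mul_complex_Ioi (a := -s + ω * Complex.I)
    (by simpa using hs) 0)
  rw [integral_cexp_neg_mul_add_mul_I_Ioi hs] at h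
  convert h using 1
  · simp [Complex.exp_re]
  · simp only [RCLike.re_to_complex, Complex.div_ofReal_re]
    simp

theorem integral_exp_neg_mul_mul_sin_Ioi {s : ℝ} (hs : 0 < s) (ω : ℝ) :
    ∫ u in Ioi (0 : ℝ), exp (-s * u) * sin (ω * u) = ω / (ω ^ 2 + s ^ 2) := by
  have h := integral_im (integrableOn_exp_mul_complex_Ioi (a := -s + ω * Complex.I)
    (by simpa using hs) 0)
  rw [integral_cexp_neg_mul_add_mul_I_Ioi hs] at h
  convert h using 1
  · simp [Complex.exp_im]
  · simp only [RCLike.im_to_complex, Complex.div_ofReal_im]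
    simp

theorem conformable_laplace_sin_cos_general (α : ℝ) (hα0 : 0 < α)
    (ω : ℝ) (s : ℝ) (hs : 0 < s) :
    (∫ t in Set.Ioi (0 : ℝ),
        Real.exp (-s * t ^ α / α) * Real.sin (ω * t ^ α / α) * t ^ (α - 1)
      = ω / (ω ^ 2 + s ^ 2)) ∧
    (∫ t in Set.Ioi (0 : ℝ),
        Real.exp (-s * t ^ α / α) * Real.cos (ω * t ^ α / α) * t ^ (α - 1)
      = s / (ω ^ 2 + s ^ 2)) := by
  have reduce (f : ℝ → ℝ) : ∫ t in Ioi 0, exp (-s * t ^ α / α) * f (ω * t ^ α / α) * t ^ (α - 1)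
      = ∫ u in Ioi 0, exp (-s * u) * f (ω * u) := by
    rw [← integral_comp_rpow_div_Ioi (fun u => exp (-s * u) * f (ω * u)) hα0]
    refine setIntegral_congr_fun measurableSet_Ioi fun t _ => ?_
    rw [smul_eq_mul, mul_div_assoc, mul_div_assoc, mul_comm]
  exact ⟨(reduce sin).trans (integral_exp_neg_mul_mul_sin_Ioi hs ω),
    (reduce cos).trans (integral_exp_neg_mul_mul_cos_Ioi hs ω)⟩

/-- Conformable Laplace transforms of `sin(ω t^α/α)` and `cos(ω t^α/α)`. -/
theorem conformable_laplace_sin_cos (α : ℝ) (hα0 : 0 < α) (hα1 : α ≤ 1)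
    (ω : ℝ) (s : ℝ) (hs : 0 < s) :
    (∫ t in Set.Ioi (0 : ℝ),
        Real.exp (-s * t ^ α / α) * Real.sin (ω * t ^ α / α) * t ^ (α - 1)
      = ω / (ω ^ 2 + s ^ 2)) ∧
    (∫ t in Set.Ioi (0 : ℝ),
        Real.exp (-s * t ^ α / α) * Real.cos (ω * t ^ α / α) * t ^ (α - 1)
      = s / (ω ^ 2 + s ^ 2)) :=
  conformable_laplace_sin_cos_general α hα0 ω s hs
end

section
/- Transform of the conformable derivative: for α ∈ (0,1] and f differentiable on (0,∞) with right limit f(0) at 0, if e^{−s t^α/α} f(t) → 0 as t → ∞ and the relevant integrals converge absolutely, then L_α[T_α f](s) = s L_α[f](s) − f(0). -/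
/-!
The weights `t ^ (1 - α)` and `t ^ (α - 1)` cancel, so the left side is `∫ e^{-s t^α/α} f'(t) dt`.
Integrating by parts with `d/dt e^{-s t^α/α} = -s t^(α-1) e^{-s t^α/α}` turns it into
`s L_α[f](s)` plus the boundary terms, which are `0` at `∞` and `-f(0)` at `0⁺`.
-/

open MeasureTheory Filter Topology Set

lemma rpow_one_sub_mul_rpow_sub_one {t : ℝ} (ht : 0 < t) (α : ℝ) :
    t ^ (1 - α) * t ^ (α - 1) = 1 := by
  rw [← Real.rpow_add ht, sub_add_sub_cancel, sub_self, Real.rpow_zero]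

lemma hasDerivAt_exp_mul_rpow_div {α t : ℝ} (hα : α ≠ 0) (ht : t ≠ 0) (c : ℝ) :
    HasDerivAt (fun u : ℝ => Real.exp (c * u ^ α / α))
      (Real.exp (c * t ^ α / α) * (c * t ^ (α - 1))) t := by
  have h := ((Real.hasDerivAt_rpow_const (p := α) (Or.inl ht)).const_mul c).div_const α
  convert h.exp using 1
  field_simp

lemma tendsto_exp_mul_rpow_div_nhdsGT_zero {α : ℝ} (hα : 0 < α) (c : ℝ) :
    Tendsto (fun t : ℝ => Real.exp (c * t ^ α / α)) (𝓝[>] 0) (𝓝 1) := by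
  have h : ContinuousAt (fun t : ℝ => Real.exp (c * t ^ α / α)) 0 := by
    have := Real.continuousAt_rpow_const 0 α (Or.inr hα.le)
    fun_prop
  simpa [Real.zero_rpow hα.ne'] using h.continuousWithinAt.tendsto (s := Ioi 0)

theorem integral_Ioi_exp_mul_deriv {α s f0 : ℝ} {f : ℝ → ℝ} (hα : 0 < α)
    (hdiff : ∀ t > 0, DifferentiableAt ℝ f t)
    (hlim0 : Tendsto f (𝓝[>] 0) (𝓝 f0))
    (hlim : Tendsto (fun t => Real.exp (-s * t ^ α / α) * f t) atTop (𝓝 0))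
    (hf : IntegrableOn (fun t => Real.exp (-s * t ^ α / α) * f t * t ^ (α - 1)) (Ioi 0))
    (hf' : IntegrableOn (fun t => Real.exp (-s * t ^ α / α) * deriv f t) (Ioi 0)) :
    ∫ t in Ioi 0, Real.exp (-s * t ^ α / α) * deriv f t
      = s * (∫ t in Ioi 0, Real.exp (-s * t ^ α / α) * f t * t ^ (α - 1)) - f0 := by
  have hexp := fun t (ht : t ∈ Ioi (0:ℝ)) => hasDerivAt_exp_mul_rpow_div hα.ne' (ne_of_gt ht) (-s)
  have hexp' : IntegrableOn
      (fun t => Real.exp (-s * t ^ α / α) * (-s * t ^ (α - 1)) * f t) (Ioi 0) :=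
    IntegrableOn.congr_fun (hf.const_mul (-s)) (fun t _ => by ring) measurableSet_Ioi
  have hlim_zero : Tendsto (fun t => Real.exp (-s * t ^ α / α) * f t) (𝓝[>] 0) (𝓝 f0) := by
    simpa using (tendsto_exp_mul_rpow_div_nhdsGT_zero hα (-s)).mul hlim0
  have hmul : ∫ t in Ioi 0, Real.exp (-s * t ^ α / α) * (-s * t ^ (α - 1)) * f t
      = -s * ∫ t in Ioi 0, Real.exp (-s * t ^ α / α) * f t * t ^ (α - 1) := by
    rw [← integral_const_mul]
    exact integral_congr_ae (Eventually.of_forall fun t => by ring)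
  rw [integral_Ioi_mul_deriv_eq_deriv_mul hexp (fun t ht => (hdiff t ht).hasDerivAt) hf' hexp'
    hlim_zero hlim, hmul]
  ring

theorem conformable_laplace_deriv_general (α : ℝ) (hα0 : 0 < α)
    (f : ℝ → ℝ) (s : ℝ) (f0 : ℝ)
    (hdiff : ∀ t > 0, DifferentiableAt ℝ f t)
    (hlim0 : Tendsto f (𝓝[>] (0 : ℝ)) (𝓝 f0))
    (hlim : Tendsto (fun t : ℝ => Real.exp (-s * t ^ α / α) * f t) atTop (𝓝 0))
    (hint1 : IntegrableOn
      (fun t : ℝ => Real.exp (-s * t ^ α / α) * f t * t ^ (α - 1))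
      (Set.Ioi (0 : ℝ)))
    (hint2 : IntegrableOn
      (fun t : ℝ => Real.exp (-s * t ^ α / α) * (t ^ (1 - α) * deriv f t) * t ^ (α - 1))
      (Set.Ioi (0 : ℝ))) :
    ∫ t in Set.Ioi (0 : ℝ),
        Real.exp (-s * t ^ α / α) * (t ^ (1 - α) * deriv f t) * t ^ (α - 1)
      = s * (∫ t in Set.Ioi (0 : ℝ),
          Real.exp (-s * t ^ α / α) * f t * t ^ (α - 1)) - f0 := by
  have hT : EqOn (fun t => Real.exp (-s * t ^ α / α) * (t ^ (1 - α) * deriv f t) * t ^ (α - 1))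
      (fun t => Real.exp (-s * t ^ α / α) * deriv f t) (Ioi 0) := fun t ht => by
    dsimp only
    rw [mul_assoc, mul_right_comm _ (deriv f t), rpow_one_sub_mul_rpow_sub_one ht, one_mul]
  rw [setIntegral_congr_fun measurableSet_Ioi hT]
  exact integral_Ioi_exp_mul_deriv hα0 hdiff hlim0 hlim hint1 (hint2.congr_fun hT measurableSet_Ioi)

/-- Conformable Laplace transform of the conformable derivative:
`L_α[T_α f](s) = s L_α[f](s) − f(0)`. -/
theorem conformable_laplace_deriv (α : ℝ) (hα0 : 0 < α) (hα1 : α ≤ 1)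
    (f : ℝ → ℝ) (s : ℝ) (f0 : ℝ)
    (hdiff : ∀ t > 0, DifferentiableAt ℝ f t)
    (hlim0 : Tendsto f (𝓝[>] (0 : ℝ)) (𝓝 f0))
    (hlim : Tendsto (fun t : ℝ => Real.exp (-s * t ^ α / α) * f t) atTop (𝓝 0))
    (hint1 : IntegrableOn
      (fun t : ℝ => Real.exp (-s * t ^ α / α) * f t * t ^ (α - 1))
      (Set.Ioi (0 : ℝ)))
    (hint2 : IntegrableOn
      (fun t : ℝ => Real.exp (-s * t ^ α / α) * (t ^ (1 - α) * deriv f t) * t ^ (α - 1))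
      (Set.Ioi (0 : ℝ))) :
    ∫ t in Set.Ioi (0 : ℝ),
        Real.exp (-s * t ^ α / α) * (t ^ (1 - α) * deriv f t) * t ^ (α - 1)
      = s * (∫ t in Set.Ioi (0 : ℝ),
          Real.exp (-s * t ^ α / α) * f t * t ^ (α - 1)) - f0 :=
  conformable_laplace_deriv_general α hα0 f s f0 hdiff hlim0 hlim hint1 hint2
end

section
/- Frequency differentiation: for α ∈ (0,1], n ∈ ℕ, and f such that the conformable Laplace transform F_α(s) = L_α[f](s) converges absolutely for s > s₀ > 0, one has L_α[t^{nα}/α^n · f(t)](s) = (−1)^n (d^n/ds^n) F_α(s) for s > s₀. -/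
/-!
With `φ t = t ^ α / α` the conformable Laplace transform of `f` is `∫ e^{-sφ} h` over `(0, ∞)`,
where `h t = f t * t ^ (α - 1)`, and `t ^ (nα) / α ^ n = φ ^ n`. For `s > m > s₀` the `s`-derivative
of the integrand of `∫ e^{-sφ} φ^k h` is dominated by `e^{-mφ} φ^{k+1} |h|`, so one may differentiate
under the integral sign, and induction on `k` gives the `n`-th derivative.
If `f` is not a.e. measurable, both sides are the junk value `0` of the Bochner integral.
-/

open MeasureTheory Set Filter

theorem iteratedDeriv_eqOn_of_hasDerivAt {𝕜 F : Type*} [NontriviallyNormedField 𝕜]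
    [NormedAddCommGroup F] [NormedSpace 𝕜 F] {G : ℕ → 𝕜 → F} {U : Set 𝕜} {n : ℕ}
    (hU : IsOpen U) (hG : ∀ k < n, ∀ x ∈ U, HasDerivAt (G k) (G (k + 1) x) x) :
    ∀ k ≤ n, EqOn (iteratedDeriv k (G 0)) (G k) U := by
  intro k hk
  induction k with
  | zero => exact fun _ _ => rfl
  | succ k ih =>
    intro x hx
    rw [iteratedDeriv_succ, ((ih (by omega)).eventuallyEq_of_mem (hU.mem_nhds hx)).deriv_eq]
    exact (hG k hk x hx).deriv

theorem not_aestronglyMeasurable_mul {X : Type*} [MeasurableSpace X] {μ : Measure X}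
    {s : Set X} (hs : MeasurableSet s) {c f : X → ℝ} (hc : Measurable c)
    (hc0 : ∀ x ∈ s, c x ≠ 0) (hf : ¬AEStronglyMeasurable f (μ.restrict s)) :
    ¬AEStronglyMeasurable (fun x => c x * f x) (μ.restrict s) := by
  refine fun hcf => hf ((hc.inv.aestronglyMeasurable.mul hcf).congr ?_)
  filter_upwards [ae_restrict_mem hs] with x hx
  simp [hc0 x hx]

section LaplaceTransform

variable {X : Type*} [MeasurableSpace X] {μ : Measure X} {φ : X → ℝ} {s₀ : ℝ}

theorem hasDerivAt_integral_exp_neg_mul {g : X → ℝ} (hφ_nonneg : ∀ᵐ t ∂μ, 0 ≤ φ t)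
    (hφ : AEStronglyMeasurable φ μ) (hg : AEStronglyMeasurable g μ) {u : ℝ} (hu : s₀ < u)
    (hint : Integrable (fun t => Real.exp (-u * φ t) * g t) μ)
    (hint' : ∀ s > s₀, Integrable (fun t => Real.exp (-s * φ t) * (φ t * g t)) μ) :
    HasDerivAt (fun x => ∫ t, Real.exp (-x * φ t) * g t ∂μ)
      (-∫ t, Real.exp (-u * φ t) * (φ t * g t) ∂μ) u := by
  obtain ⟨m, hs₀m, hmu⟩ := exists_between hu
  have hmeas : ∀ x : ℝ, AEStronglyMeasurable (fun t => Real.exp (-x * φ t) * g t) μ := by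
    intro x; fun_prop
  have hbound : ∀ᵐ t ∂μ, ∀ x ∈ Ioi m,
      ‖-(Real.exp (-x * φ t) * (φ t * g t))‖ ≤ ‖Real.exp (-m * φ t) * (φ t * g t)‖ := by
    filter_upwards [hφ_nonneg] with t ht x hx
    simp only [norm_neg, norm_mul, Real.norm_eq_abs, Real.abs_exp]
    gcongr
    exact hx.le
  have hderiv : ∀ᵐ t ∂μ, ∀ x ∈ Ioi m, HasDerivAt (fun x => Real.exp (-x * φ t) * g t)
      (-(Real.exp (-x * φ t) * (φ t * g t))) x := by
    refine ae_of_all _ fun t x _ => ?_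
    exact (((hasDerivAt_neg x).mul_const (φ t)).exp.mul_const (g t)).congr_deriv (by ring)
  simpa only [integral_neg] using (hasDerivAt_integral_of_dominated_loc_of_deriv_le
    (Ioi_mem_nhds hmu) (Eventually.of_forall hmeas) hint (hint' u hu).aestronglyMeasurable.neg
    hbound (hint' m hs₀m).norm hderiv).2

theorem iteratedDeriv_integral_exp_neg_mul {h : X → ℝ} {n : ℕ} (hφ_nonneg : ∀ᵐ t ∂μ, 0 ≤ φ t)
    (hφ : AEStronglyMeasurable φ μ) (hh : AEStronglyMeasurable h μ)
    (hint : ∀ k ≤ n, ∀ s > s₀, Integrable (fun t => Real.exp (-s * φ t) * (φ t ^ k * h t)) μ)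
    {s : ℝ} (hs : s₀ < s) :
    iteratedDeriv n (fun x => ∫ t, Real.exp (-x * φ t) * h t ∂μ) s =
      (-1) ^ n * ∫ t, Real.exp (-s * φ t) * (φ t ^ n * h t) ∂μ := by
  set G : ℕ → ℝ → ℝ := fun k x => (-1) ^ k * ∫ t, Real.exp (-x * φ t) * (φ t ^ k * h t) ∂μ
  have hG : ∀ k < n, ∀ x ∈ Ioi s₀, HasDerivAt (G k) (G (k + 1) x) x := by
    intro k hk x hx
    have hint' : ∀ s > s₀, Integrable (fun t => Real.exp (-s * φ t) * (φ t * (φ t ^ k * h t))) μ := by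
      simpa only [pow_succ', mul_assoc] using hint (k + 1) hk
    refine ((hasDerivAt_integral_exp_neg_mul hφ_nonneg hφ (by fun_prop) hx (hint k hk.le x hx)
      hint').const_mul ((-1 : ℝ) ^ k)).congr_deriv ?_
    simp only [G, pow_succ', mul_assoc]
    ring
  have hG0 : G 0 = fun x => ∫ t, Real.exp (-x * φ t) * h t ∂μ := by
    simp [G]
  rw [← hG0]
  exact iteratedDeriv_eqOn_of_hasDerivAt isOpen_Ioi hG n le_rfl hs

end LaplaceTransform

noncomputable def conformableLaplace (α : ℝ) (f : ℝ → ℝ) (s : ℝ) : ℝ :=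
  ∫ t in Ioi 0, Real.exp (-s * t ^ α / α) * f t * t ^ (α - 1)

section ConformableLaplace

variable {α : ℝ} {f : ℝ → ℝ}

lemma rpow_div_pow {t : ℝ} (ht : 0 ≤ t) (α : ℝ) (k : ℕ) :
    (t ^ α / α) ^ k = t ^ (k * α) / α ^ k := by
  rw [div_pow, ← Real.rpow_mul_natCast ht, mul_comm]

lemma conformableLaplace_eq_integral_exp_neg_mul (s : ℝ) :
    conformableLaplace α f s =
      ∫ t in Ioi 0, Real.exp (-s * (t ^ α / α)) * (f t * t ^ (α - 1)) := by
  simp only [conformableLaplace, mul_div_assoc, mul_assoc]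

lemma conformableLaplace_of_not_aestronglyMeasurable
    (hf : ¬AEStronglyMeasurable f (volume.restrict (Ioi 0))) (s : ℝ) :
    conformableLaplace α f s = 0 := by
  simp only [conformableLaplace, mul_right_comm _ (f _)]
  refine integral_non_aestronglyMeasurable (not_aestronglyMeasurable_mul measurableSet_Ioi
    (by fun_prop) (fun t ht => ?_) hf)
  have ht : 0 < t := ht
  positivity

lemma integrable_conformable_moment_of_abs (hα : 0 < α)
    (hf : AEStronglyMeasurable f (volume.restrict (Ioi 0))) {k : ℕ} {s : ℝ}
    (h : IntegrableOn
      (fun t : ℝ => Real.exp (-s * t ^ α / α) * (t ^ (k * α) * |f t|) * t ^ (α - 1)) (Ioi 0)) :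
    Integrable (fun t : ℝ => Real.exp (-s * (t ^ α / α)) * ((t ^ α / α) ^ k * (f t * t ^ (α - 1))))
      (volume.restrict (Ioi 0)) := by
  refine (h.const_mul (α ^ k)⁻¹).mono' (by fun_prop) ?_
  filter_upwards [ae_restrict_mem measurableSet_Ioi] with t ht
  have ht : 0 < t := ht
  rw [rpow_div_pow ht.le]
  simp only [Real.norm_eq_abs, abs_mul, abs_div, Real.abs_exp, abs_pow, abs_of_pos hα,
    abs_of_pos (Real.rpow_pos_of_pos ht _)]
  apply le_of_eq
  ring_nf

theorem iteratedDeriv_conformableLaplace (hα : 0 < α)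
    (hf : AEStronglyMeasurable f (volume.restrict (Ioi 0))) {n : ℕ} {s₀ : ℝ}
    (hconv : ∀ k ≤ n, ∀ s > s₀, IntegrableOn
      (fun t : ℝ => Real.exp (-s * t ^ α / α) * (t ^ (k * α) * |f t|) * t ^ (α - 1)) (Ioi 0))
    {s : ℝ} (hs : s₀ < s) :
    iteratedDeriv n (conformableLaplace α f) s =
      (-1) ^ n * conformableLaplace α (fun t => t ^ (n * α) / α ^ n * f t) s := by
  have hφ_nonneg : ∀ᵐ t ∂(volume.restrict (Ioi (0 : ℝ))), 0 ≤ t ^ α / α := by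
    filter_upwards [ae_restrict_mem measurableSet_Ioi] with t ht
    have ht : 0 < t := ht
    positivity
  rw [funext conformableLaplace_eq_integral_exp_neg_mul,
    iteratedDeriv_integral_exp_neg_mul hφ_nonneg (by fun_prop) (by fun_prop)
      (fun k hk s hs => integrable_conformable_moment_of_abs hα hf (hconv k hk s hs)) hs,
    conformableLaplace]
  congr 1
  refine setIntegral_congr_fun measurableSet_Ioi fun t ht => ?_
  rw [rpow_div_pow (le_of_lt ht)]
  ring_nf

end ConformableLaplace

theorem conformable_laplace_freq_diff_general (α : ℝ) (hα0 : 0 < α)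
    (n : ℕ) (f : ℝ → ℝ) (s₀ : ℝ)
    (hconv : ∀ k ≤ n, ∀ s > s₀, IntegrableOn
      (fun t : ℝ => Real.exp (-s * t ^ α / α) * (t ^ (k * α) * |f t|) * t ^ (α - 1))
      (Set.Ioi (0 : ℝ))) :
    ∀ s > s₀,
      ∫ t in Set.Ioi (0 : ℝ),
          Real.exp (-s * t ^ α / α) * (t ^ (n * α) / α ^ n * f t) * t ^ (α - 1)
        = (-1 : ℝ) ^ n * iteratedDeriv n
            (fun u : ℝ => ∫ t in Set.Ioi (0 : ℝ),
              Real.exp (-u * t ^ α / α) * f t * t ^ (α - 1)) s := by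
  intro s hs
  show conformableLaplace α (fun t => t ^ (n * α) / α ^ n * f t) s =
    (-1) ^ n * iteratedDeriv n (conformableLaplace α f) s
  by_cases hf : AEStronglyMeasurable f (volume.restrict (Ioi 0))
  · rw [iteratedDeriv_conformableLaplace hα0 hf hconv hs, ← mul_assoc, ← mul_pow]
    norm_num
  · have hmoment : ¬AEStronglyMeasurable (fun t => t ^ (n * α) / α ^ n * f t)
        (volume.restrict (Ioi 0)) :=
      not_aestronglyMeasurable_mul measurableSet_Ioi (by fun_prop)
        (fun t ht => (div_pos (Real.rpow_pos_of_pos ht _) (pow_pos hα0 n)).ne') hf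
    rw [conformableLaplace_of_not_aestronglyMeasurable hmoment,
      funext (conformableLaplace_of_not_aestronglyMeasurable hf), iteratedDeriv_const]
    simp

/-- Frequency differentiation property of the conformable Laplace transform. -/
theorem conformable_laplace_freq_diff (α : ℝ) (hα0 : 0 < α) (hα1 : α ≤ 1)
    (n : ℕ) (f : ℝ → ℝ) (s₀ : ℝ) (hs₀ : 0 < s₀)
    (hconv : ∀ k ≤ n, ∀ s > s₀, IntegrableOn
      (fun t : ℝ => Real.exp (-s * t ^ α / α) * (t ^ (k * α) * |f t|) * t ^ (α - 1))
      (Set.Ioi (0 : ℝ))) :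
    ∀ s > s₀,
      ∫ t in Set.Ioi (0 : ℝ),
          Real.exp (-s * t ^ α / α) * (t ^ (n * α) / α ^ n * f t) * t ^ (α - 1)
        = (-1 : ℝ) ^ n * iteratedDeriv n
            (fun u : ℝ => ∫ t in Set.Ioi (0 : ℝ),
              Real.exp (-u * t ^ α / α) * f t * t ^ (α - 1)) s :=
  conformable_laplace_freq_diff_general α hα0 n f s₀ hconv
end

section
/- The conformable Laguerre function y(x) = Σ_{k=0}^{n} (−1)^k n!/(α^k (n−k)! (k!)²) x^{kα} solves the conformable Laguerre equation x^α T_α(T_α y)(x) + (α − x^α) T_α y(x) + n α y(x) = 0 for all x > 0, where α ∈ (0,1] and n ∈ ℕ. -/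
open Finset

/-- The conformable derivative of order `α`. -/
noncomputable def cderiv (α : ℝ) (f : ℝ → ℝ) : ℝ → ℝ :=
  fun x => x ^ (1 - α) * deriv f x

/-- The conformable Laguerre polynomial `L_n(x^α/α)`. -/
noncomputable def confLaguerre (α : ℝ) (n : ℕ) : ℝ → ℝ :=
  fun x => ∑ k ∈ range (n + 1),
    (-1 : ℝ) ^ k * (n.factorial : ℝ) /
        (α ^ k * ((n - k).factorial : ℝ) * ((k.factorial : ℝ)) ^ 2)
      * x ^ (k * α)

/-! Since `T_α (x ^ p) = p x ^ (p - α)` on `(0, ∞)`, both conformable derivatives of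
`∑ c_k x^{kα}` are again such sums, and the left side of the equation collapses to
`∑_k (c_{k+1} (k+1)² α² + c_k (n - k) α) x^{kα}`. Each bracket vanishes by the ratio
`c_{k+1} / c_k = -(n - k) / ((k + 1)² α)` of consecutive coefficients. -/

open Filter Topology

noncomputable def confLaguerreCoeff (α : ℝ) (n k : ℕ) : ℝ :=
  (-1 : ℝ) ^ k * (n.factorial : ℝ) /
    (α ^ k * ((n - k).factorial : ℝ) * ((k.factorial : ℝ)) ^ 2)

lemma confLaguerre_eq_sum (α : ℝ) (n : ℕ) :
    confLaguerre α n = fun x => ∑ k ∈ range (n + 1), confLaguerreCoeff α n k * x ^ ((k : ℝ) * α) :=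
  rfl

lemma confLaguerreCoeff_succ (α : ℝ) {n k : ℕ} (hk : k < n) :
    confLaguerreCoeff α n (k + 1) * ((k + 1) ^ 2 * α ^ 2)
      + confLaguerreCoeff α n k * ((n - k) * α) = 0 := by
  rcases eq_or_ne α 0 with rfl | hα
  · simp
  obtain ⟨m, rfl⟩ : ∃ m, n = k + 1 + m := ⟨n - (k + 1), by omega⟩
  have hfac : ((k + 1 + m - k).factorial : ℝ) = (m + 1) * ((k + 1 + m - (k + 1)).factorial : ℝ) := by
    rw [show k + 1 + m - k = m + 1 by omega, show k + 1 + m - (k + 1) = m by omega]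
    push_cast [Nat.factorial_succ]
    ring
  simp only [confLaguerreCoeff, hfac, Nat.factorial_succ, pow_succ]
  push_cast
  field_simp
  ring

lemma cderiv_congr_of_eventuallyEq {α : ℝ} {f g : ℝ → ℝ} {x : ℝ} (h : f =ᶠ[𝓝 x] g) :
    cderiv α f x = cderiv α g x := by
  rw [cderiv, cderiv, h.deriv_eq]

lemma cderiv_sum_rpow (α : ℝ) (s : Finset ℕ) (c e : ℕ → ℝ) {x : ℝ} (hx : 0 < x) :
    cderiv α (fun y => ∑ k ∈ s, c k * y ^ e k) x = ∑ k ∈ s, c k * e k * x ^ (e k - α) := by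
  have hderiv : HasDerivAt (fun y => ∑ k ∈ s, c k * y ^ e k)
      (∑ k ∈ s, c k * (e k * x ^ (e k - 1))) x :=
    HasDerivAt.fun_sum fun k _ => (Real.hasDerivAt_rpow_const (Or.inl hx.ne')).const_mul (c k)
  rw [cderiv, hderiv.deriv, mul_sum]
  refine sum_congr rfl fun k _ => ?_
  rw [show e k - α = (1 - α) + (e k - 1) by ring, Real.rpow_add hx]
  ring

lemma cderiv_cderiv_sum_rpow (α : ℝ) (s : Finset ℕ) (c e : ℕ → ℝ) {x : ℝ} (hx : 0 < x) :
    cderiv α (cderiv α (fun y => ∑ k ∈ s, c k * y ^ e k)) x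
      = ∑ k ∈ s, c k * e k * (e k - α) * x ^ (e k - α - α) := by
  have hgerm : cderiv α (fun y => ∑ k ∈ s, c k * y ^ e k)
      =ᶠ[𝓝 x] fun y => ∑ k ∈ s, c k * e k * y ^ (e k - α) :=
    eventually_of_mem (Ioi_mem_nhds hx) fun y hy => cderiv_sum_rpow α s c e hy
  rw [cderiv_congr_of_eventuallyEq hgerm, cderiv_sum_rpow α s _ _ hx]

lemma sum_range_add_sum_range_eq_zero_of_shift {a b : ℕ → ℝ} {n : ℕ} (ha : a 0 = 0)
    (hb : b n = 0) (hab : ∀ k < n, a (k + 1) + b k = 0) :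
    ∑ k ∈ range (n + 1), a k + ∑ k ∈ range (n + 1), b k = 0 := by
  rw [sum_range_succ' a, sum_range_succ b, ha, hb, add_zero, add_zero, ← sum_add_distrib]
  exact sum_eq_zero fun k hk => hab k (mem_range.mp hk)

theorem confLaguerre_solves_general (α : ℝ) (n : ℕ) :
    ∀ x > 0,
      x ^ α * cderiv α (cderiv α (confLaguerre α n)) x
        + (α - x ^ α) * cderiv α (confLaguerre α n) x
        + n * α * confLaguerre α n x = 0 := by
  intro x hx
  set c := confLaguerreCoeff α n
  rw [confLaguerre_eq_sum, cderiv_cderiv_sum_rpow _ _ _ _ hx, cderiv_sum_rpow _ _ _ _ hx]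
  calc _ = ∑ k ∈ range (n + 1), c k * (k ^ 2 * α ^ 2) * x ^ ((k : ℝ) * α - α)
          + ∑ k ∈ range (n + 1), c k * ((n - k) * α) * x ^ ((k : ℝ) * α) := by
        simp only [mul_sum, ← sum_add_distrib]
        refine sum_congr rfl fun k _ => ?_
        have h₁ : x ^ α * x ^ ((k : ℝ) * α - α - α) = x ^ ((k : ℝ) * α - α) := by
          rw [← Real.rpow_add hx]; ring_nf
        have h₂ : x ^ α * x ^ ((k : ℝ) * α - α) = x ^ ((k : ℝ) * α) := by
          rw [← Real.rpow_add hx]; ring_nf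
        linear_combination (c k * (k * α) * (k * α - α)) * h₁ - (c k * (k * α)) * h₂
    _ = 0 := by
        refine sum_range_add_sum_range_eq_zero_of_shift (by simp) (by simp) fun k hk => ?_
        rw [show ((k + 1 : ℕ) : ℝ) * α - α = k * α by push_cast; ring]
        push_cast
        linear_combination x ^ ((k : ℝ) * α) * confLaguerreCoeff_succ α hk

/-- The conformable Laguerre function solves the conformable Laguerre equation. -/
theorem confLaguerre_solves (α : ℝ) (hα0 : 0 < α) (hα1 : α ≤ 1) (n : ℕ) :
    ∀ x > 0,
      x ^ α * cderiv α (cderiv α (confLaguerre α n)) x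
        + (α - x ^ α) * cderiv α (confLaguerre α n) x
        + n * α * confLaguerre α n x = 0 :=
  confLaguerre_solves_general α n
end

section
/- Conformable Rodrigues formula: for α ∈ (0,1] and n ∈ ℕ, (e^{x^α/α} / (α^n n!)) · T_α^n [x^{nα} e^{−x^α/α}] = Σ_{k=0}^{n} (−1)^k n!/(α^k (n−k)! (k!)²) x^{kα} for all x > 0, where T_α^n denotes the n-fold conformable derivative. -/
/-!
With `t = x ^ α / α` one has `dt/dx = x ^ (α - 1)`, so on `x > 0` the conformable derivative
`T_α` acts on functions of `t` as the ordinary derivative `d/dt`, and hence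
`T_α^n [g (x ^ α / α)] = g⁽ⁿ⁾ (x ^ α / α)`. Since `x ^ (nα) e^{-x^α/α} = α ^ n tⁿ e⁻ᵗ`, the
formula reduces to the classical Rodrigues formula `eᵗ / n! · dⁿ/dtⁿ (tⁿ e⁻ᵗ) = Lₙ(t)`, which
is the Leibniz rule for `tⁿ · e⁻ᵗ`.
-/

open Finset

open Set Real

theorem hasDerivAt_rpow_div_exponent {α x : ℝ} (hα : α ≠ 0) (hx : 0 < x) :
    HasDerivAt (fun u : ℝ => u ^ α / α) (x ^ (α - 1)) x := by
  simpa [mul_div_cancel_left₀ _ hα] using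
    (hasDerivAt_rpow_const (p := α) (Or.inl hx.ne')).div_const α

theorem cderiv_comp_rpow_div_exponent {α x : ℝ} {g : ℝ → ℝ} (hα : α ≠ 0) (hx : 0 < x)
    (hg : DifferentiableAt ℝ g (x ^ α / α)) :
    cderiv α (fun u => g (u ^ α / α)) x = deriv g (x ^ α / α) := by
  have hcomp : HasDerivAt (fun u => g (u ^ α / α)) (deriv g (x ^ α / α) * x ^ (α - 1)) x :=
    hg.hasDerivAt.comp x (hasDerivAt_rpow_div_exponent hα hx)
  rw [cderiv, hcomp.deriv, mul_left_comm, ← rpow_add hx, sub_add_sub_cancel', sub_self,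
    rpow_zero, mul_one]

theorem cderiv_congr_Ioi {α : ℝ} {f₁ f₂ : ℝ → ℝ} (h : EqOn f₁ f₂ (Ioi 0)) :
    EqOn (cderiv α f₁) (cderiv α f₂) (Ioi 0) := fun x hx => by
  rw [cderiv, cderiv, (h.eventuallyEq_of_mem (Ioi_mem_nhds hx)).deriv_eq]

theorem iterate_cderiv_eqOn_comp_rpow_div_exponent {α : ℝ} {f g : ℝ → ℝ} {m : ℕ}
    (hα : α ≠ 0) (hg : ContDiff ℝ m g) (hf : EqOn f (fun u => g (u ^ α / α)) (Ioi 0)) :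
    EqOn ((cderiv α)^[m] f) (fun u => iteratedDeriv m g (u ^ α / α)) (Ioi 0) := by
  induction m with
  | zero => simpa using hf
  | succ m ih =>
    intro x hx
    have hdiff := hg.differentiable_iteratedDeriv m (by norm_cast; omega)
    rw [Function.iterate_succ_apply', cderiv_congr_Ioi (ih (hg.of_le (by norm_cast; omega))) hx,
      cderiv_comp_rpow_div_exponent hα hx (hdiff _), iteratedDeriv_succ]

theorem rpow_div_exponent_pow {α u : ℝ} (k : ℕ) (hu : 0 ≤ u) :
    (u ^ α / α) ^ k = u ^ (k * α) / α ^ k := by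
  rw [div_pow, ← rpow_natCast, ← rpow_mul hu, mul_comm α]

theorem laguerre_rodrigues (n : ℕ) (t : ℝ) :
    exp t / n.factorial * iteratedDeriv n (fun s => s ^ n * exp (-s)) t
      = ∑ k ∈ range (n + 1), (-1) ^ k * n.choose k / k.factorial * t ^ k := by
  have hexp : ∀ j, iteratedDeriv j (fun s => exp (-s)) t = (-1) ^ j * exp (-t) := fun j => by
    simpa using congrFun (iteratedDeriv_exp_const_mul j (-1)) t
  have hpow : ContDiffAt ℝ n (fun s : ℝ => s ^ n) t := (contDiff_id.pow n).contDiffAt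
  have hexpc : ContDiffAt ℝ n (fun s => exp (-s)) t := (contDiff_exp.comp contDiff_neg).contDiffAt
  rw [iteratedDeriv_fun_mul hpow hexpc]
  simp only [iteratedDeriv_pow, hexp]
  rw [← sum_range_reflect, mul_sum]
  refine sum_congr rfl fun k hk => ?_
  have hkn : k ≤ n := Nat.lt_succ_iff.mp (mem_range.mp hk)
  have hfac : (k.factorial : ℝ) * n.descFactorial (n - k) = n.factorial := by
    exact_mod_cast (Nat.sub_sub_self hkn ▸ Nat.factorial_mul_descFactorial (Nat.sub_le n k))
  rw [Nat.add_sub_cancel, Nat.sub_sub_self hkn, Nat.choose_symm hkn, ← hfac, exp_neg]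
  field_simp

theorem conformable_rodrigues_general (α : ℝ) (hα0 : 0 < α) (n : ℕ) :
    ∀ x > 0,
      Real.exp (x ^ α / α) / (α ^ n * n.factorial)
          * ((cderiv α)^[n] (fun u : ℝ => u ^ (n * α) * Real.exp (-u ^ α / α))) x
        = ∑ k ∈ range (n + 1),
            (-1 : ℝ) ^ k * (n.factorial : ℝ) /
                (α ^ k * ((n - k).factorial : ℝ) * ((k.factorial : ℝ)) ^ 2)
              * x ^ (k * α) := by
  intro x hx
  have hsubst : EqOn (fun u : ℝ => u ^ (n * α) * exp (-u ^ α / α))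
      (fun u => α ^ n * ((u ^ α / α) ^ n * exp (-(u ^ α / α)))) (Ioi 0) := fun u hu => by
    dsimp only
    rw [rpow_div_exponent_pow n hu.le, neg_div]
    field_simp
  have hg : ContDiff ℝ n (fun t : ℝ => α ^ n * (t ^ n * exp (-t))) := by fun_prop
  rw [iterate_cderiv_eqOn_comp_rpow_div_exponent hα0.ne' hg hsubst hx]
  dsimp only
  rw [iteratedDeriv_const_mul_field, mul_left_comm, ← mul_assoc, ← mul_div_assoc,
    mul_div_mul_left _ _ (pow_ne_zero n hα0.ne'), laguerre_rodrigues]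
  refine sum_congr rfl fun k hk => ?_
  have hkn : k ≤ n := Nat.lt_succ_iff.mp (mem_range.mp hk)
  rw [rpow_div_exponent_pow k hx.le, ← Nat.choose_mul_factorial_mul_factorial hkn]
  push_cast
  field_simp

/-- Conformable Rodrigues formula for the conformable Laguerre polynomials. -/
theorem conformable_rodrigues (α : ℝ) (hα0 : 0 < α) (hα1 : α ≤ 1) (n : ℕ) :
    ∀ x > 0,
      Real.exp (x ^ α / α) / (α ^ n * n.factorial)
          * ((cderiv α)^[n] (fun u : ℝ => u ^ (n * α) * Real.exp (-u ^ α / α))) x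
        = ∑ k ∈ range (n + 1),
            (-1 : ℝ) ^ k * (n.factorial : ℝ) /
                (α ^ k * ((n - k).factorial : ℝ) * ((k.factorial : ℝ)) ^ 2)
              * x ^ (k * α) :=
  conformable_rodrigues_general α hα0 n
end

section
/- If S solves the conformable Laguerre equation of order n+m, i.e. x^α T_α² S + (α − x^α) T_α S + (n+m)α S = 0 on (0,∞), and S is smooth, then y = T_α^m S solves the conformable associated Laguerre equation x^α T_α² y + (mα + α − x^α) T_α y + nα y = 0 on (0,∞). -/
lemma cderiv_smooth (α : ℝ) {f : ℝ → ℝ} (hf : ContDiffOn ℝ (⊤ : ℕ∞) f (Set.Ioi 0)) :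
    ContDiffOn ℝ (⊤ : ℕ∞) (cderiv α f) (Set.Ioi 0) := by
  have hd : ContDiffOn ℝ (⊤ : ℕ∞) (deriv f) (Set.Ioi 0) :=
    hf.deriv_of_isOpen isOpen_Ioi (by simp)
  have hp : ContDiffOn ℝ (⊤ : ℕ∞) (fun x : ℝ => x ^ (1 - α)) (Set.Ioi 0) := by
    intro x hx
    exact (Real.contDiffAt_rpow_const_of_ne (ne_of_gt hx)).contDiffWithinAt
  exact hp.mul hd

lemma hasDerivAt_of_smooth {f : ℝ → ℝ} (hf : ContDiffOn ℝ (⊤ : ℕ∞) f (Set.Ioi 0))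
    {x : ℝ} (hx : 0 < x) : HasDerivAt f (deriv f x) x := by
  have h : ContDiffAt ℝ (⊤ : ℕ∞) f x :=
    (hf x hx).contDiffAt (isOpen_Ioi.mem_nhds hx)
  exact (h.differentiableAt (by simp)).hasDerivAt

lemma step (α c N : ℝ) (y : ℝ → ℝ)
    (hy : ContDiffOn ℝ (⊤ : ℕ∞) y (Set.Ioi 0))
    (heq : ∀ x > 0, x ^ α * cderiv α (cderiv α y) x + (c - x ^ α) * cderiv α y x
      + N * α * y x = 0) :
    ∀ x > 0, x ^ α * cderiv α (cderiv α (cderiv α y)) x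
      + (c + α - x ^ α) * cderiv α (cderiv α y) x
      + (N - 1) * α * cderiv α y x = 0 := by
  intro x hx
  have h1 : ContDiffOn ℝ (⊤ : ℕ∞) (cderiv α y) (Set.Ioi 0) := cderiv_smooth α hy
  have h2 : ContDiffOn ℝ (⊤ : ℕ∞) (cderiv α (cderiv α y)) (Set.Ioi 0) := cderiv_smooth α h1
  -- derivatives
  have hy' : HasDerivAt y (deriv y x) x := hasDerivAt_of_smooth hy hx
  have h1' : HasDerivAt (cderiv α y) (deriv (cderiv α y) x) x := hasDerivAt_of_smooth h1 hx
  have h2' : HasDerivAt (cderiv α (cderiv α y)) (deriv (cderiv α (cderiv α y)) x) x :=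
    hasDerivAt_of_smooth h2 hx
  have hpow : HasDerivAt (fun t : ℝ => t ^ α) (α * x ^ (α - 1)) x :=
    Real.hasDerivAt_rpow_const (Or.inl (ne_of_gt hx))
  set y' := deriv y x
  set g1' := deriv (cderiv α y) x
  set g2' := deriv (cderiv α (cderiv α y)) x
  set a := x ^ α with ha
  set b := x ^ (1 - α) with hb
  set e := x ^ (α - 1) with he
  -- the LHS function of the hypothesis equation
  set L : ℝ → ℝ := fun t => t ^ α * cderiv α (cderiv α y) t + (c - t ^ α) * cderiv α y t
      + N * α * y t with hL
  have hLD : HasDerivAt L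
      ((α * e * cderiv α (cderiv α y) x + a * g2')
        + ((-(α * e)) * cderiv α y x + (c - a) * g1') + N * α * y') x := by
    have h := ((hpow.mul h2').add
      (((hasDerivAt_const x c).sub hpow).mul h1')).add ((hasDerivAt_const x (N*α)).mul hy')
    exact h.congr_deriv (by simp only [Pi.sub_apply]; rw [← ha]; ring)
  have hL0 : HasDerivAt L 0 x := by
    have hev : L =ᶠ[nhds x] (fun _ => (0:ℝ)) := by
      filter_upwards [isOpen_Ioi.mem_nhds hx] with t ht
      exact heq t ht
    exact (hasDerivAt_const x (0:ℝ)).congr_of_eventuallyEq hev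
  have hD : (α * e * cderiv α (cderiv α y) x + a * g2')
      + ((-(α * e)) * cderiv α y x + (c - a) * g1') + N * α * y' = 0 :=
    hLD.unique hL0
  have hbe : b * e = 1 := by
    rw [hb, he, ← Real.rpow_add hx]
    norm_num
  have e1 : cderiv α y x = b * y' := rfl
  have e2 : cderiv α (cderiv α y) x = b * g1' := rfl
  have e3 : cderiv α (cderiv α (cderiv α y)) x = b * g2' := rfl
  rw [e1, e2, e3]
  rw [e1, e2] at hD
  linear_combination b * hD + (α * b * y' - α * b * g1') * hbe

/-- If `S` solves the conformable Laguerre equation of order `n+m`, then `T_α^m S`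
solves the conformable associated Laguerre equation. -/
theorem associated_laguerre_from_laguerre (α : ℝ) (hα0 : 0 < α) (hα1 : α ≤ 1)
    (n m : ℕ) (S : ℝ → ℝ)
    (hS : ∀ x ∈ Set.Ioi (0 : ℝ), ContDiffAt ℝ (⊤ : ℕ∞) S x)
    (heq : ∀ x > 0,
      x ^ α * cderiv α (cderiv α S) x + (α - x ^ α) * cderiv α S x
        + (n + m) * α * S x = 0) :
    ∀ x > 0,
      x ^ α * cderiv α (cderiv α ((cderiv α)^[m] S)) x
        + (m * α + α - x ^ α) * cderiv α ((cderiv α)^[m] S) x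
        + n * α * ((cderiv α)^[m] S) x = 0 := by
  have hS0 : ContDiffOn ℝ (⊤ : ℕ∞) S (Set.Ioi 0) := fun x hx => (hS x hx).contDiffWithinAt
  have key : ∀ j : ℕ, ContDiffOn ℝ (⊤ : ℕ∞) ((cderiv α)^[j] S) (Set.Ioi 0) ∧
      ∀ x > 0, x ^ α * cderiv α (cderiv α ((cderiv α)^[j] S)) x
        + ((j : ℝ) * α + α - x ^ α) * cderiv α ((cderiv α)^[j] S) x
        + ((n : ℝ) + (m : ℝ) - (j : ℝ)) * α * ((cderiv α)^[j] S) x = 0 := by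
    intro j
    induction j with
    | zero =>
      refine ⟨by simpa using hS0, ?_⟩
      intro x hx
      have := heq x hx
      simp only [Function.iterate_zero, id_eq]
      push_cast at this ⊢
      linarith [this]
    | succ j ih =>
      obtain ⟨hsm, hEq⟩ := ih
      constructor
      · rw [Function.iterate_succ_apply']
        exact cderiv_smooth α hsm
      · intro x hx
        have := step α ((j : ℝ) * α + α) ((n : ℝ) + (m : ℝ) - (j : ℝ))
          ((cderiv α)^[j] S) hsm hEq x hx
        rw [Function.iterate_succ_apply']
        push_cast
        ring_nf at this ⊢
        linarith [this]
  intro x hx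
  have := (key m).2 x hx
  push_cast at this ⊢
  ring_nf at this ⊢
  linarith [this]
end

section
/- Rodrigues formula for associated conformable Laguerre polynomials: for α ∈ (0,1] and m, n ∈ ℕ, (x^{−mα} e^{x^α/α} / (α^n n!)) · T_α^n [x^{(n+m)α} e^{−x^α/α}] = Σ_{r=0}^{n} (−1)^r (n+m)! / (α^r (n−r)! (r+m)! r!) x^{rα} for all x > 0. -/
/-!
Put `t = x ^ α / α`. Since `dt/dx = x ^ (α - 1)`, the conformable derivative acts on functions of
`t` as `d/dt`, and `x ^ ((n + m) α) = α ^ (n + m) t ^ (n + m)`. The formula thus becomes the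
classical Rodrigues formula `L_n^m(t) = t ^ (-m) e ^ t / n! · (d/dt)^n (t ^ (n + m) e ^ (-t))`,
which is Leibniz's rule.
-/

open Finset

open Real Filter Topology
open scoped ContDiff

noncomputable def assocLaguerre (n m : ℕ) (t : ℝ) : ℝ :=
  ∑ r ∈ range (n + 1),
    (-1 : ℝ) ^ r * (n + m).factorial / ((n - r).factorial * (r + m).factorial * r.factorial) * t ^ r

theorem iteratedDeriv_pow_mul_exp_neg (n m : ℕ) (t : ℝ) :
    iteratedDeriv n (fun s => s ^ (n + m) * exp (-s)) t
      = n.factorial * (t ^ m * exp (-t) * assocLaguerre n m t) := by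
  have hexp : (fun s => exp (-s)) = fun s => exp (-1 * s) := by simp
  rw [iteratedDeriv_fun_mul (contDiff_id.pow _).contDiffAt (by fun_prop), hexp]
  simp only [iteratedDeriv_exp_const_mul]
  rw [assocLaguerre, mul_sum, mul_sum, ← sum_range_reflect]
  refine sum_congr rfl fun r hr => ?_
  have hrn : r ≤ n := Nat.lt_succ_iff.mp (mem_range.mp hr)
  have hdesc : ((n + m).descFactorial (n - r) : ℝ) * (r + m).factorial = (n + m).factorial := by
    have h := Nat.factorial_mul_descFactorial (n := n + m) (k := n - r) (by omega)
    rw [show n + m - (n - r) = r + m by omega] at h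
    exact_mod_cast (mul_comm _ _).trans h
  rw [Nat.add_sub_cancel, iteratedDeriv_pow, Nat.choose_symm hrn, Nat.cast_choose ℝ hrn,
    show n + m - (n - r) = r + m by omega, show n - (n - r) = r by omega, ← hdesc, neg_one_mul]
  field_simp
  ring

theorem cderiv_eq_deriv_comp {α : ℝ} (hα : α ≠ 0) {f g : ℝ → ℝ} {x : ℝ} (hx : 0 < x)
    (hg : DifferentiableAt ℝ g (x ^ α / α)) (hfg : f =ᶠ[𝓝 x] fun u => g (u ^ α / α)) :
    cderiv α f x = deriv g (x ^ α / α) := by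
  have hφ : HasDerivAt (fun u => u ^ α / α) (x ^ (α - 1)) x := by
    simpa only [mul_div_cancel_left₀ _ hα] using
      (hasDerivAt_rpow_const (p := α) (Or.inl hx.ne')).div_const α
  have hcomp : HasDerivAt (fun u => g (u ^ α / α)) (deriv g (x ^ α / α) * x ^ (α - 1)) x :=
    hg.hasDerivAt.comp x hφ
  rw [cderiv, hfg.deriv_eq, hcomp.deriv, mul_left_comm,
    ← rpow_add hx, sub_add_sub_cancel', sub_self, rpow_zero, mul_one]

theorem iterate_cderiv_eq_iteratedDeriv {α : ℝ} (hα : α ≠ 0) (n : ℕ) {f g : ℝ → ℝ}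
    (hg : ContDiff ℝ ∞ g) (hfg : ∀ u > 0, f u = g (u ^ α / α)) :
    ∀ x > 0, (cderiv α)^[n] f x = iteratedDeriv n g (x ^ α / α) := by
  induction n generalizing f g with
  | zero => simpa using hfg
  | succ n ih =>
    intro x hx
    rw [Function.iterate_succ_apply, iteratedDeriv_succ']
    refine ih (contDiff_infty_iff_deriv.mp hg).2 (fun u hu => ?_) x hx
    refine cderiv_eq_deriv_comp hα hu (hg.differentiable (by simp) _) ?_
    filter_upwards [Ioi_mem_nhds hu] with v hv using hfg v hv

theorem conformable_associated_rodrigues_general (α : ℝ) (hα0 : 0 < α)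
    (n m : ℕ) :
    ∀ x > 0,
      x ^ (-(m : ℝ) * α) * Real.exp (x ^ α / α) / (α ^ n * n.factorial)
          * ((cderiv α)^[n] (fun u : ℝ => u ^ ((n + m : ℕ) * α) * Real.exp (-u ^ α / α))) x
        = ∑ r ∈ range (n + 1),
            (-1 : ℝ) ^ r * ((n + m).factorial : ℝ) /
                (α ^ r * ((n - r).factorial : ℝ) * (((r + m).factorial : ℝ)) * (r.factorial : ℝ))
              * x ^ (r * α) := by
  have hpow {u : ℝ} (hu : 0 < u) (k : ℕ) : u ^ ((k : ℝ) * α) = α ^ k * (u ^ α / α) ^ k := by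
    rw [mul_comm, rpow_mul_natCast hu.le, ← mul_pow, mul_div_cancel₀ _ hα0.ne']
  have hsubst : ∀ u > 0, u ^ ((n + m : ℕ) * α) * exp (-u ^ α / α)
      = α ^ (n + m) * ((u ^ α / α) ^ (n + m) * exp (-(u ^ α / α))) := fun u hu => by
    rw [hpow hu, neg_div, mul_assoc]
  intro x hx
  rw [iterate_cderiv_eq_iteratedDeriv hα0.ne' n
      (g := fun s => α ^ (n + m) * (s ^ (n + m) * exp (-s))) (by fun_prop) hsubst x hx,
    iteratedDeriv_const_mul_field, iteratedDeriv_pow_mul_exp_neg]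
  have hL : ∑ r ∈ range (n + 1), (-1 : ℝ) ^ r * ((n + m).factorial : ℝ) /
                (α ^ r * ((n - r).factorial : ℝ) * (((r + m).factorial : ℝ)) * (r.factorial : ℝ))
              * x ^ (r * α) = assocLaguerre n m (x ^ α / α) := by
    refine sum_congr rfl fun r _ => ?_
    rw [hpow hx]
    field_simp
  have hm : x ^ (-(m : ℝ) * α) * α ^ m * (x ^ α / α) ^ m = 1 := by
    rw [neg_mul, rpow_neg hx.le, hpow hx]
    field_simp
  have hexp : exp (x ^ α / α) * exp (-(x ^ α / α)) = 1 := by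
    rw [← exp_add, add_neg_cancel, exp_zero]
  rw [hL, pow_add, div_mul_eq_mul_div, div_eq_iff (by positivity)]
  linear_combination α ^ n * n.factorial * assocLaguerre n m (x ^ α / α) *
    (exp (x ^ α / α) * exp (-(x ^ α / α)) * hm + hexp)

/-- Rodrigues formula for the conformable associated Laguerre polynomials. -/
theorem conformable_associated_rodrigues (α : ℝ) (hα0 : 0 < α) (hα1 : α ≤ 1)
    (n m : ℕ) :
    ∀ x > 0,
      x ^ (-(m : ℝ) * α) * Real.exp (x ^ α / α) / (α ^ n * n.factorial)
          * ((cderiv α)^[n] (fun u : ℝ => u ^ ((n + m : ℕ) * α) * Real.exp (-u ^ α / α))) x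
        = ∑ r ∈ range (n + 1),
            (-1 : ℝ) ^ r * ((n + m).factorial : ℝ) /
                (α ^ r * ((n - r).factorial : ℝ) * (((r + m).factorial : ℝ)) * (r.factorial : ℝ))
              * x ^ (r * α) :=
  conformable_associated_rodrigues_general α hα0 n m
end
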